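/- Let r, s ≥ 0 be integers with n = 2(r+s) ≥ 1, and let v ∈ (ℤ/4ℤ)^n have type (t₀, t₁, t₂, t₃). Then 2 · C(n, t₀+t₂) · (|S(v,0)| + |S(v,2)|) = C(n; r,s,r,s) · c, where c is the coefficient of x^{t₀+t₂} y^{t₁+t₃} in the integer polynomial (x+y)^n + (x+y)^{2r}(x−y)^{2s}. -/

import Mathlib

/-!
Reducing mod 2, `v · b ∈ {0, 2}` iff `|odd(v) ∩ odd(b)|` is even, where `odd(b)` is the set of odd
coordinates. A vector of type `(r, s, r, s)` is determined by its odd support `T` (of size `2s`) and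
by where it equals `1` inside `T` and `0` outside `T`, so `|S(v,0)| + |S(v,2)|` is
`C(2s, s) C(2r, r)` times the number of `2s`-sets meeting `odd(v)` evenly. Twice that number is
`C(n, 2s) + K_{2s}(|odd(v)|)`, with `K` the binary Krawtchouk polynomials, and the coefficient in the
theorem is `C(n, t₁+t₃) + K_{t₁+t₃}(2s)`. The two are matched by the reciprocity
`C(n, x) K_k(x) = C(n, k) K_x(k)`, which comes from computing `∑_{|O| = x, |T| = k} (-1)^{|O ∩ T|}`
in two orders.
-/

/-- The number of coordinates of `v ∈ (ℤ/4ℤ)^n` equal to `k`. -/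
def typeCount {n : ℕ} (v : Fin n → ZMod 4) (k : ZMod 4) : ℕ :=
  (Finset.univ.filter fun i => v i = k).card

/-- `v ∈ (ℤ/4ℤ)^n` has type `(t₀, t₁, t₂, t₃)`. -/
def HasType {n : ℕ} (v : Fin n → ZMod 4) (t0 t1 t2 t3 : ℕ) : Prop :=
  typeCount v 0 = t0 ∧ typeCount v 1 = t1 ∧ typeCount v 2 = t2 ∧ typeCount v 3 = t3

instance {n : ℕ} (v : Fin n → ZMod 4) (t0 t1 t2 t3 : ℕ) :
    Decidable (HasType v t0 t1 t2 t3) := by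
  unfold HasType; infer_instance

/-- `|S(v, a)|`: the number of vectors `b` of type `(r, s, r, s)` with
`v · b = a` in `ℤ/4ℤ`. -/
def Scard {n : ℕ} (r s : ℕ) (v : Fin n → ZMod 4) (a : ZMod 4) : ℕ :=
  (Finset.univ.filter fun b : Fin n → ZMod 4 =>
    HasType b r s r s ∧ (∑ i, v i * b i) = a).card

/-- The eigenvalue `λ(v) = |S(v,0)| - |S(v,2)|` of `Cay((ℤ/4ℤ)^n, S)`. -/
def lambdaEV {n : ℕ} (r s : ℕ) (v : Fin n → ZMod 4) : ℤ :=
  (Scard r s v 0 : ℤ) - (Scard r s v 2 : ℤ)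

/-- The multinomial coefficient `C(n; r, s, r, s)` (with `n = 2(r+s)`). -/
def multinomRSRS (r s : ℕ) : ℕ :=
  Nat.multinomial Finset.univ ![r, s, r, s]

open Finset

/-- The binary Krawtchouk polynomial `K_k` of length `n`, evaluated at `x`. -/
def krawtchouk (n k x : ℕ) : ℤ :=
  ∑ p ∈ antidiagonal k, (-1) ^ p.1 * (x.choose p.1 * (n - x).choose p.2)

lemma krawtchouk_zero_right (n k : ℕ) : krawtchouk n k 0 = n.choose k := by
  rw [krawtchouk, sum_eq_single (0, k)]
  · simp
  · rintro ⟨i, j⟩ hij hne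
    rw [HasAntidiagonal.mem_antidiagonal] at hij
    obtain rfl | hi := Nat.eq_zero_or_pos i
    · simp_all
    · simp [Nat.choose_eq_zero_of_lt hi]
  · simp

section Subsets

variable {ι : Type*} [Fintype ι] [DecidableEq ι]

lemma inter_union_of_subset_of_subset_compl {O U V : Finset ι} (hU : U ⊆ O) (hV : V ⊆ Oᶜ) :
    O ∩ (U ∪ V) = U ∧ (U ∪ V) \ O = V := by
  rw [subset_compl_iff_disjoint_right] at hV
  constructor
  · rw [inter_union_distrib_left, inter_eq_right.mpr hU, disjoint_iff_inter_eq_empty.mp hV.symm,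
      union_empty]
  · rw [union_sdiff_distrib, sdiff_eq_empty_iff_subset.mpr hU, hV.sdiff_eq_left, empty_union]

lemma card_filter_card_inter_card_sdiff (O : Finset ι) (i j : ℕ) :
    #{T : Finset ι | #(O ∩ T) = i ∧ #(T \ O) = j}
      = (#O).choose i * (Fintype.card ι - #O).choose j := by
  rw [← card_compl, ← card_powersetCard, ← card_powersetCard, ← card_product]
  refine card_nbij' (fun T => (O ∩ T, T \ O)) (fun p => p.1 ∪ p.2) ?_ ?_ ?_ ?_
  · intro T hT
    simp only [coe_filter, mem_univ, true_and, Set.mem_ofPred_eq] at hT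
    simp only [coe_product, Set.mem_prod, mem_coe, mem_powersetCard]
    exact ⟨⟨inter_subset_left, hT.1⟩, fun x hx => mem_compl.mpr (mem_sdiff.mp hx).2, hT.2⟩
  · rintro ⟨U, V⟩ hUV
    simp only [coe_product, Set.mem_prod, mem_coe, mem_powersetCard] at hUV
    obtain ⟨hU, hV⟩ := inter_union_of_subset_of_subset_compl hUV.1.1 hUV.2.1
    simp [hU, hV, hUV.1.2, hUV.2.2]
  · intro T _
    change O ∩ T ∪ T \ O = T
    rw [inter_comm]
    exact sup_inf_sdiff T O
  · rintro ⟨U, V⟩ hUV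
    simp only [coe_product, Set.mem_prod, mem_coe, mem_powersetCard] at hUV
    obtain ⟨hU, hV⟩ := inter_union_of_subset_of_subset_compl hUV.1.1 hUV.2.1
    simp [hU, hV]

lemma sum_powersetCard_neg_one_pow_card_inter (O : Finset ι) (c : ℕ) :
    ∑ T ∈ powersetCard c univ, (-1 : ℤ) ^ #(O ∩ T) = krawtchouk (Fintype.card ι) c #O := by
  have hmaps : ∀ T ∈ powersetCard c (univ : Finset ι), (#(O ∩ T), #(T \ O)) ∈ antidiagonal c := by
    intro T hT
    rw [HasAntidiagonal.mem_antidiagonal, inter_comm, card_inter_add_card_sdiff,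
      mem_powersetCard_univ.mp hT]
  rw [← sum_fiberwise_of_maps_to hmaps, krawtchouk]
  refine sum_congr rfl fun p hp => ?_
  have hfiber : {T ∈ powersetCard c (univ : Finset ι) | (#(O ∩ T), #(T \ O)) = p}
      = ({T | #(O ∩ T) = p.1 ∧ #(T \ O) = p.2} : Finset (Finset ι)) := by
    ext T
    rw [HasAntidiagonal.mem_antidiagonal] at hp
    simp only [mem_filter, mem_powersetCard_univ, mem_univ, true_and, Prod.ext_iff]
    constructor
    · exact And.right
    · rintro h
      refine ⟨?_, h⟩
      rw [← hp, ← h.1, ← h.2, inter_comm, card_inter_add_card_sdiff]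
  have hsign : ∀ T ∈ {T ∈ powersetCard c (univ : Finset ι) | (#(O ∩ T), #(T \ O)) = p},
      (-1 : ℤ) ^ #(O ∩ T) = (-1) ^ p.1 := fun T hT => by rw [← (mem_filter.mp hT).2]
  rw [sum_congr rfl hsign, sum_const, hfiber, card_filter_card_inter_card_sdiff, nsmul_eq_mul]
  push_cast
  ring

lemma choose_mul_krawtchouk_comm (n k x : ℕ) :
    n.choose x * krawtchouk n k x = n.choose k * krawtchouk n x k := by
  have h (a b : ℕ) : ∑ O ∈ powersetCard a (univ : Finset (Fin n)),
      ∑ T ∈ powersetCard b univ, (-1 : ℤ) ^ #(O ∩ T) = n.choose a * krawtchouk n b a := by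
    rw [sum_congr rfl fun O hO => by
      rw [sum_powersetCard_neg_one_pow_card_inter O b, Fintype.card_fin,
        mem_powersetCard_univ.mp hO],
      sum_const, card_powersetCard, card_univ, Fintype.card_fin, nsmul_eq_mul]
  rw [← h, ← h, sum_comm]
  simp_rw [inter_comm]

lemma two_mul_card_filter_even {α : Type*} (s : Finset α) (f : α → ℕ) :
    2 * (#{x ∈ s | Even (f x)} : ℤ) = #s + ∑ x ∈ s, (-1) ^ f x := by
  rw [card_filter, card_eq_sum_ones, Nat.cast_sum, Nat.cast_sum, mul_sum, ← sum_add_distrib]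
  refine sum_congr rfl fun x _ => ?_
  rcases Nat.even_or_odd (f x) with h | h <;> simp [h, h.neg_one_pow, Nat.not_even_iff_odd.mpr]

end Subsets

section Polynomials

open MvPolynomial

lemma coeff_single_add_single_eq_coeff_aeval {R : Type*} [CommSemiring R]
    {p : MvPolynomial (Fin 2) R} {a b : ℕ} (hp : p.IsHomogeneous (a + b)) :
    coeff (Finsupp.single 0 a + Finsupp.single 1 b) p
      = (aeval ![1, Polynomial.X] p).coeff b := by
  have hmono (m : Fin 2 →₀ ℕ) :
      (m.prod fun i k => (![1, Polynomial.X] : Fin 2 → Polynomial R) i ^ k)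
        = Polynomial.X ^ m 1 := by
    simp [Finsupp.prod_fintype _ _ (fun _ => pow_zero _)]
  conv_rhs => rw [p.as_sum]
  simp only [map_sum, aeval_monomial, Polynomial.finsetSum_coeff, hmono,
    Polynomial.algebraMap_eq, Polynomial.coeff_C_mul_X_pow]
  rw [sum_eq_single (Finsupp.single 0 a + Finsupp.single 1 b)]
  · simp
  · intro m hm hne
    rw [if_neg]
    intro hb
    have hdeg := hp (mem_support_iff.mp hm)
    simp only [Finsupp.weight_apply, Pi.one_apply, smul_eq_mul, mul_one] at hdeg
    rw [Finsupp.sum_fintype _ _ (fun _ => rfl), Fin.sum_univ_two] at hdeg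
    exact hne (Finsupp.ext fun i => by fin_cases i <;> simp <;> omega)
  · intro h
    simp [notMem_support_iff.mp h]

lemma coeff_one_sub_X_pow {R : Type*} [CommRing R] (B j : ℕ) :
    ((1 - Polynomial.X : Polynomial R) ^ B).coeff j = (-1) ^ j * B.choose j := by
  have hcomp : (1 - Polynomial.X : Polynomial R) ^ B
      = ((1 + Polynomial.X) ^ B).comp (Polynomial.C (-1) * Polynomial.X) := by
    simp [sub_eq_add_neg]
  rw [hcomp, Polynomial.comp_C_mul_X_coeff, Polynomial.coeff_one_add_X_pow, Nat.cast_comm]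

lemma coeff_add_pow_mul_sub_pow (A B a b : ℕ) (h : a + b = A + B) :
    coeff (Finsupp.single 0 a + Finsupp.single 1 b)
      ((X 0 + X 1) ^ A * (X 0 - X 1) ^ B : MvPolynomial (Fin 2) ℤ) = krawtchouk (A + B) b B := by
  have hX (i : Fin 2) := isHomogeneous_X ℤ i
  have hp : ((X 0 + X 1) ^ A * (X 0 - X 1) ^ B : MvPolynomial (Fin 2) ℤ).IsHomogeneous (a + b) := by
    simpa [h] using (((hX 0).add (hX 1)).pow A).mul (((hX 0).sub (hX 1)).pow B)
  rw [coeff_single_add_single_eq_coeff_aeval hp, krawtchouk, Nat.add_sub_cancel]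
  simp only [map_mul, map_pow, map_add, map_sub, aeval_X, Matrix.cons_val_zero, Matrix.cons_val_one,
    Matrix.cons_val_fin_one]
  rw [mul_comm, Polynomial.coeff_mul]
  refine sum_congr rfl fun p _ => ?_
  rw [coeff_one_sub_X_pow, Polynomial.coeff_one_add_X_pow]
  ring

end Polynomials

section OddSupport

variable {ι : Type*} [Fintype ι] [DecidableEq ι]

def oddSupp (b : ι → ZMod 4) : Finset ι := {i | b i = 1 ∨ b i = 3}

lemma even_card_inter_oddSupp_iff (v b : ι → ZMod 4) :
    Even #(oddSupp v ∩ oddSupp b) ↔ ∑ i, v i * b i = 0 ∨ ∑ i, v i * b i = 2 := by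
  let π : ZMod 4 →+* ZMod 2 := ZMod.castHom (by norm_num) (ZMod 2)
  have hπ : ∀ x y : ZMod 4, π (x * y) = if (x = 1 ∨ x = 3) ∧ (y = 1 ∨ y = 3) then 1 else 0 := by
    decide
  have hsum : π (∑ i, v i * b i) = #(oddSupp v ∩ oddSupp b) := by
    simp only [map_sum, hπ, sum_boole, oddSupp, filter_and]
  rw [← ZMod.natCast_eq_zero_iff_even, ← hsum]
  generalize ∑ i, v i * b i = x
  revert x
  decide

def ofLevelSets (T U Z : Finset ι) (i : ι) : ZMod 4 :=
  if i ∈ T then (if i ∈ U then 1 else 3) else (if i ∈ Z then 0 else 2)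

lemma filter_ofLevelSets {T U Z : Finset ι} (hU : U ⊆ T) (hZ : Z ⊆ Tᶜ) :
    ({i | ofLevelSets T U Z i = 0} : Finset ι) = Z ∧
      ({i | ofLevelSets T U Z i = 1} : Finset ι) = U ∧
      ({i | ofLevelSets T U Z i = 2} : Finset ι) = Tᶜ \ Z ∧
      ({i | ofLevelSets T U Z i = 3} : Finset ι) = T \ U := by
  have hUT : ∀ i, i ∉ T → i ∉ U := fun i hT hi => hT (hU hi)
  have hZT : ∀ i, i ∈ T → i ∉ Z := fun i hT hi => mem_compl.mp (hZ hi) hT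
  refine ⟨?_, ?_, ?_, ?_⟩ <;> ext i <;> by_cases hT : i ∈ T <;>
    rw [mem_filter_univ] <;> simp +decide [ofLevelSets, ite_eq_iff, hT, hUT i, hZT i]

end OddSupport

section TypeCounts

variable {n r s : ℕ}

lemma card_filter_eq_or_eq (v : Fin n → ZMod 4) {x y : ZMod 4} (hxy : x ≠ y) :
    #{i | v i = x ∨ v i = y} = typeCount v x + typeCount v y := by
  rw [filter_or,
    card_union_of_disjoint (disjoint_filter.2 fun i _ hx hy => hxy (hx.symm.trans hy))]
  rfl

lemma card_oddSupp (v : Fin n → ZMod 4) : #(oddSupp v) = typeCount v 1 + typeCount v 3 :=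
  card_filter_eq_or_eq v (by decide)

lemma card_compl_oddSupp (v : Fin n → ZMod 4) :
    #(oddSupp v)ᶜ = typeCount v 0 + typeCount v 2 := by
  have heven : ∀ x : ZMod 4, ¬(x = 1 ∨ x = 3) ↔ x = 0 ∨ x = 2 := by decide
  rw [oddSupp, compl_filter, ← card_filter_eq_or_eq v (by decide)]
  simp only [heven]

lemma card_hasType_oddSupp_eq (hn : n = 2 * (r + s)) {T : Finset (Fin n)} (hT : #T = 2 * s) :
    #{b : Fin n → ZMod 4 | HasType b r s r s ∧ oddSupp b = T}
      = (2 * s).choose s * (2 * r).choose r := by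
  have hTc : #Tᶜ = 2 * r := by rw [card_compl, Fintype.card_fin, hT]; omega
  rw [← hT, ← hTc, ← card_powersetCard, ← card_powersetCard, ← card_product]
  refine card_nbij' (fun b => (({i | b i = 1} : Finset (Fin n)), ({i | b i = 0} : Finset (Fin n))))
    (fun p => ofLevelSets T p.1 p.2) ?_ ?_ ?_ ?_
  · rintro b hb
    simp only [coe_filter, mem_univ, true_and, Set.mem_ofPred_eq] at hb
    obtain ⟨⟨h0, h1, -, -⟩, rfl⟩ := hb
    simp only [coe_product, Set.mem_prod, mem_coe, mem_powersetCard]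
    refine ⟨⟨fun i hi => ?_, h1⟩, fun i hi => ?_, h0⟩ <;>
      simp_all +decide [oddSupp]
  · rintro ⟨U, Z⟩ hUZ
    simp only [coe_product, Set.mem_prod, mem_coe, mem_powersetCard] at hUZ
    obtain ⟨⟨hU, hUc⟩, hZ, hZc⟩ := hUZ
    obtain ⟨h0, h1, h2, h3⟩ := filter_ofLevelSets hU hZ
    simp only [coe_filter, mem_univ, true_and, Set.mem_ofPred_eq]
    refine ⟨⟨?_, ?_, ?_, ?_⟩, ?_⟩
    · rw [typeCount, h0, hZc]
    · rw [typeCount, h1, hUc]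
    · rw [typeCount, h2, card_sdiff_of_subset hZ, hTc, hZc]; omega
    · rw [typeCount, h3, card_sdiff_of_subset hU, hT, hUc]; omega
    · rw [oddSupp, filter_or, h1, h3, union_sdiff_of_subset hU]
  · rintro b hb
    simp only [coe_filter, mem_univ, true_and, Set.mem_ofPred_eq] at hb
    obtain ⟨-, rfl⟩ := hb
    funext i
    simp only [ofLevelSets, oddSupp, mem_filter_univ]
    generalize b i = x
    revert x
    decide
  · rintro ⟨U, Z⟩ hUZ
    simp only [coe_product, Set.mem_prod, mem_coe, mem_powersetCard] at hUZ
    obtain ⟨h0, h1, -, -⟩ := filter_ofLevelSets hUZ.1.1 hUZ.2.1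
    simp only [h0, h1]

lemma card_hasType_filter_oddSupp (hn : n = 2 * (r + s)) (P : Finset (Fin n) → Prop)
    [DecidablePred P] :
    #{b : Fin n → ZMod 4 | HasType b r s r s ∧ P (oddSupp b)}
      = #{T ∈ powersetCard (2 * s) univ | P T} * ((2 * s).choose s * (2 * r).choose r) := by
  have hmaps : ∀ b ∈ ({b | HasType b r s r s ∧ P (oddSupp b)} : Finset (Fin n → ZMod 4)),
      oddSupp b ∈ {T ∈ powersetCard (2 * s) (univ : Finset (Fin n)) | P T} := by
    intro b hb
    rw [mem_filter_univ] at hb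
    rw [mem_filter, mem_powersetCard_univ, card_oddSupp, hb.1.2.1, hb.1.2.2.2]
    exact ⟨by ring, hb.2⟩
  rw [card_eq_sum_card_fiberwise hmaps]
  refine sum_const_nat fun T hT => ?_
  rw [mem_filter, mem_powersetCard_univ] at hT
  rw [← card_hasType_oddSupp_eq hn hT.1, filter_filter]
  refine congrArg card (filter_congr fun b _ => ?_)
  constructor
  · rintro ⟨⟨h, -⟩, rfl⟩
    exact ⟨h, rfl⟩
  · rintro ⟨h, rfl⟩
    exact ⟨⟨h, hT.2⟩, rfl⟩

lemma Scard_zero_add_Scard_two (v : Fin n → ZMod 4) :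
    Scard r s v 0 + Scard r s v 2
      = #{b : Fin n → ZMod 4 | HasType b r s r s ∧ Even #(oddSupp v ∩ oddSupp b)} := by
  simp_rw [even_card_inter_oddSupp_iff, and_or_left, filter_or]
  rw [card_union_of_disjoint (disjoint_filter.2 fun b _ h0 h2 =>
    absurd (h0.2.symm.trans h2.2) (by decide))]
  rfl

end TypeCounts

open Nat in
lemma multinomRSRS_eq (r s : ℕ) :
    multinomRSRS r s = (2 * (r + s)).choose (2 * s) * ((2 * s).choose s * (2 * r).choose r) := by
  have hspec := Nat.multinomial_spec (s := univ) (f := ![r, s, r, s])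
  simp only [Fin.prod_univ_four, Fin.sum_univ_four, Matrix.cons_val_zero, Matrix.cons_val_one,
    Matrix.cons_val_two, Matrix.cons_val_three, Matrix.head_cons, Matrix.tail_cons] at hspec
  refine Nat.eq_of_mul_eq_mul_left (by positivity : 0 < r ! * s ! * r ! * s !) ?_
  rw [multinomRSRS, hspec]
  have hdouble (k : ℕ) : (2 * k)! = (2 * k).choose k * k ! * k ! := by
    rw [two_mul, add_choose_mul_factorial_mul_factorial]
  calc (r + s + r + s)! = (2 * r + 2 * s)! := by ring_nf
    _ = (2 * r + 2 * s).choose (2 * s) * (2 * r)! * (2 * s)! :=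
        (add_choose_mul_factorial_mul_factorial _ _).symm
    _ = _ := by rw [hdouble r, hdouble s, ← mul_add]; ring

open MvPolynomial in
theorem beta_formula (r s n : ℕ) (hn : n = 2 * (r + s))
    (v : Fin n → ZMod 4) (t0 t1 t2 t3 : ℕ) (hv : HasType v t0 t1 t2 t3) :
    (2 * n.choose (t0 + t2) * (Scard r s v 0 + Scard r s v 2) : ℤ) =
      (multinomRSRS r s : ℤ) *
        MvPolynomial.coeff
          (Finsupp.single 0 (t0 + t2) + Finsupp.single 1 (t1 + t3))
          ((X 0 + X 1) ^ n + (X 0 + X 1) ^ (2 * r) * (X 0 - X 1) ^ (2 * s) :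
            MvPolynomial (Fin 2) ℤ) := by
  obtain ⟨h0, h1, h2, h3⟩ := hv
  have hodd : #(oddSupp v) = t1 + t3 := by rw [card_oddSupp, h1, h3]
  have hsplit : t0 + t2 + (t1 + t3) = n := by
    rw [← h0, ← h2, ← hodd, ← card_compl_oddSupp, card_compl_add_card, Fintype.card_fin]
  have hcount : 2 * (Scard r s v 0 + Scard r s v 2 : ℤ)
      = (n.choose (2 * s) + krawtchouk n (2 * s) (t1 + t3))
          * ((2 * s).choose s * (2 * r).choose r) := by
    rw [← Nat.cast_add, Scard_zero_add_Scard_two,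
      card_hasType_filter_oddSupp hn (fun T => Even #(oddSupp v ∩ T)), ← hodd, Nat.cast_mul,
      ← mul_assoc, two_mul_card_filter_even, sum_powersetCard_neg_one_pow_card_inter,
      card_powersetCard, card_univ, Fintype.card_fin]
    push_cast
    ring
  have hcoeff : MvPolynomial.coeff (Finsupp.single 0 (t0 + t2) + Finsupp.single 1 (t1 + t3))
      ((X 0 + X 1) ^ n + (X 0 + X 1) ^ (2 * r) * (X 0 - X 1) ^ (2 * s) : MvPolynomial (Fin 2) ℤ)
      = n.choose (t1 + t3) + krawtchouk n (t1 + t3) (2 * s) := by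
    have hpow : (X 0 + X 1 : MvPolynomial (Fin 2) ℤ) ^ n = (X 0 + X 1) ^ n * (X 0 - X 1) ^ 0 := by
      rw [pow_zero, mul_one]
    rw [coeff_add, hpow, coeff_add_pow_mul_sub_pow n 0 _ _ (by omega),
      coeff_add_pow_mul_sub_pow (2 * r) (2 * s) _ _ (by omega), krawtchouk_zero_right, add_zero,
      ← mul_add, ← hn]
  rw [hcoeff, multinomRSRS_eq, ← hn, Nat.choose_symm_of_eq_add hsplit.symm]
  push_cast
  linear_combination (n.choose (t1 + t3) : ℤ) * hcount
    + ((2 * s).choose s * (2 * r).choose r : ℤ) * choose_mul_krawtchouk_comm n (2 * s) (t1 + t3)
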